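/- Let n ≥ 1 and let S be a nonempty set of positive integers. Then in ℂ[X] one has Φ_{U,S,n}(X) = ∏_{d ∣∣ n, n/d ∈ S} Φ_d^*(X), where Φ_{U,S,n}(X) = ∏_{1 ≤ j ≤ n, (j,n)_* ∈ S} (X − ζ_n^j) and the product runs over the unitary divisors d of n with n/d ∈ S. -/
import Mathlib


open Complex Polynomial Finset

/-- The unitary gcd `(j,n)_*`: the largest `d` with `d ∣ j`, `d ∣ n` and `gcd(d, n/d) = 1`. -/
def ugcd (j n : ℕ) : ℕ :=
  Nat.findGreatest (fun d => d ∣ j ∧ d ∣ n ∧ Nat.gcd d (n / d) = 1) n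

/-- The unitary cyclotomic polynomial `Φ_n^*(X) = ∏_{1 ≤ j ≤ n, (j,n)_* = 1} (X − ζ_n^j)`. -/
noncomputable def unitaryCyc (n : ℕ) : Polynomial ℂ :=
  ∏ j ∈ (Finset.Icc 1 n).filter (fun j => ugcd j n = 1),
    (X - C (Complex.exp (2 * Real.pi * Complex.I / n) ^ j))

/-- The generalized cyclotomic polynomial
`Φ_{U,S,n}(X) = ∏_{1 ≤ j ≤ n, (j,n)_* ∈ S} (X − ζ_n^j)`. -/
noncomputable def genCycU (S : Set ℕ) [DecidablePred (· ∈ S)] (n : ℕ) : Polynomial ℂ :=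
  ∏ j ∈ (Finset.Icc 1 n).filter (fun j => ugcd j n ∈ S),
    (X - C (Complex.exp (2 * Real.pi * Complex.I / n) ^ j))

lemma my_div_dvd_div {a b n : ℕ} (hab : a ∣ b) (hbn : b ∣ n) : n / b ∣ n / a := by
  obtain ⟨c, rfl⟩ := hab
  obtain ⟨m, rfl⟩ := hbn
  rcases Nat.eq_zero_or_pos a with rfl | ha
  · simp
  rcases Nat.eq_zero_or_pos c with rfl | hc
  · simp
  have h1 : a * c * m / (a * c) = m := Nat.mul_div_cancel_left m (Nat.mul_pos ha hc)
  have h2 : a * c * m / a = c * m := by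
    rw [mul_assoc]; exact Nat.mul_div_cancel_left _ ha
  rw [h1, h2]
  exact Dvd.intro_left c rfl

lemma ugcd_spec (j n : ℕ) (hn : 1 ≤ n) :
    ugcd j n ∣ j ∧ ugcd j n ∣ n ∧ Nat.Coprime (ugcd j n) (n / ugcd j n) :=
  Nat.findGreatest_spec (P := fun d => d ∣ j ∧ d ∣ n ∧ Nat.gcd d (n / d) = 1) (m := 1) hn
    ⟨one_dvd _, one_dvd _, Nat.gcd_one_left _⟩

lemma ugcd_pos (j n : ℕ) (hn : 1 ≤ n) : 0 < ugcd j n :=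
  Nat.lt_of_lt_of_le Nat.zero_lt_one
    (Nat.le_findGreatest (P := fun d => d ∣ j ∧ d ∣ n ∧ Nat.gcd d (n / d) = 1) (m := 1) hn
      ⟨one_dvd _, one_dvd _, Nat.gcd_one_left _⟩)

lemma dvd_ugcd {j n d : ℕ} (hn : 1 ≤ n) (hj : 1 ≤ j) (h1 : d ∣ j) (h2 : d ∣ n)
    (h3 : Nat.Coprime d (n / d)) : d ∣ ugcd j n := by
  obtain ⟨huj, hun, huco⟩ := ugcd_spec j n hn
  set u := ugcd j n with hu
  set l := Nat.lcm d u with hl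
  have hlj : l ∣ j := Nat.lcm_dvd h1 huj
  have hln : l ∣ n := Nat.lcm_dvd h2 hun
  have hdl : d ∣ l := Nat.dvd_lcm_left _ _
  have hul : u ∣ l := Nat.dvd_lcm_right _ _
  have h4 : n / l ∣ n / d := my_div_dvd_div hdl hln
  have h5 : n / l ∣ n / u := my_div_dvd_div hul hln
  have hcd : Nat.Coprime d (n / l) := Nat.Coprime.coprime_dvd_right h4 h3
  have hcu : Nat.Coprime u (n / l) := Nat.Coprime.coprime_dvd_right h5 huco
  have hcl : Nat.Coprime l (n / l) :=
    Nat.Coprime.coprime_dvd_left (Nat.lcm_dvd_mul d u) (Nat.Coprime.mul hcd hcu)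
  have hlpos : 0 < l := Nat.pos_of_dvd_of_pos hlj hj
  have hle : l ≤ u := Nat.le_findGreatest (Nat.le_of_dvd hn hln) ⟨hlj, hln, hcl⟩
  have : l = u := Nat.le_antisymm hle (Nat.le_of_dvd hlpos hul)
  exact this ▸ hdl

/-- Key lemma: the unitary gcd of `(n/d) * k` with `n` equals `n/d`. -/
lemma ugcd_mul_eq {n d k : ℕ} (hn : 1 ≤ n) (hd : d ∣ n) (hco : Nat.Coprime d (n / d))
    (hk1 : 1 ≤ k) (hkd : k ≤ d) (hk : ugcd k d = 1) : ugcd ((n / d) * k) n = n / d := by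
  set e := n / d with he
  have hde : n = d * e := (Nat.mul_div_cancel' hd).symm
  have hdpos : 0 < d := Nat.pos_of_dvd_of_pos hd hn
  have hepos : 0 < e := Nat.div_pos (Nat.le_of_dvd hn hd) hdpos
  have hen : e ∣ n := Nat.div_dvd_of_dvd hd
  have hne : n / e = d := Nat.div_div_self hd (by omega)
  have hj1 : 1 ≤ e * k := Nat.mul_pos hepos hk1
  obtain ⟨huj, hun, huco⟩ := ugcd_spec (e * k) n hn
  set u := ugcd (e * k) n with hu
  have heu : e ∣ u := dvd_ugcd hn hj1 (dvd_mul_right e k) hen (by rw [hne]; exact hco.symm)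
  have hed : e * d = n := by rw [mul_comm]; exact hde.symm
  have hued : u ∣ e * d := hed ▸ hun
  have hab : Nat.gcd u e * Nat.gcd u d = u :=
    (Nat.gcd_mul_gcd_eq_iff_dvd_mul_of_coprime hco.symm).mpr hued
  set a := Nat.gcd u e with ha
  set b := Nat.gcd u d with hb
  have hbd : b ∣ d := Nat.gcd_dvd_right _ _
  have hbu : b ∣ u := Nat.gcd_dvd_left _ _
  have hbe : Nat.Coprime b e := hco.coprime_dvd_left hbd
  have hbk : b ∣ k := hbe.dvd_of_dvd_mul_left (dvd_trans hbu huj)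
  have hdbnu : d / b ∣ n / u := by
    have h1 : e / a * (d / b) = e * d / (a * b) :=
      Nat.div_mul_div_comm (Nat.gcd_dvd_right u e) hbd
    rw [hab, hed] at h1
    exact ⟨e / a, by rw [← h1, mul_comm]⟩
  have hcb : Nat.Coprime b (d / b) := (huco.coprime_dvd_left hbu).coprime_dvd_right hdbnu
  have hb1 : b = 1 := Nat.dvd_one.mp (hk ▸ dvd_ugcd hdpos hk1 hbk hbd hcb)
  have hue : u ∣ e := by
    rw [← hab, hb1, mul_one]; exact Nat.gcd_dvd_right u e
  exact Nat.dvd_antisymm hue heu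

lemma ugcd_div_eq_one {j n : ℕ} (hn : 1 ≤ n) (hj : 1 ≤ j) :
    ugcd (j / ugcd j n) (n / ugcd j n) = 1 := by
  obtain ⟨huj, hun, huco⟩ := ugcd_spec j n hn
  set u := ugcd j n with hu
  have hupos : 0 < u := ugcd_pos j n hn
  set d := n / u with hd
  set k := j / u with hk
  have hdpos : 0 < d := Nat.div_pos (Nat.le_of_dvd hn hun) hupos
  obtain ⟨htk, htd, htco⟩ := ugcd_spec k d hdpos
  set t := ugcd k d with ht
  have htpos : 0 < t := ugcd_pos k d hdpos
  have hukj : u * k = j := Nat.mul_div_cancel' huj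
  have hudn : u * d = n := Nat.mul_div_cancel' hun
  have h1 : u * t ∣ j := hukj ▸ mul_dvd_mul_left u htk
  have h2 : u * t ∣ n := hudn ▸ mul_dvd_mul_left u htd
  have h3 : n / (u * t) = d / t := by
    have hnn : n = (u * t) * (d / t) := by rw [mul_assoc, Nat.mul_div_cancel' htd, hudn]
    rw [hnn, Nat.mul_div_cancel_left _ (Nat.mul_pos hupos htpos)]
  have h4 : Nat.Coprime (u * t) (n / (u * t)) := by
    rw [h3]
    exact Nat.Coprime.mul (huco.coprime_dvd_right (Nat.div_dvd_of_dvd htd)) htco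
  have h5 : u * t ∣ u := dvd_ugcd hn hj h1 h2 h4
  exact Nat.dvd_one.mp ((Nat.mul_dvd_mul_iff_left hupos).mp (by rwa [mul_one]))

theorem stmt5 (S : Set ℕ) [DecidablePred (· ∈ S)] (hS : S.Nonempty)
    (hSpos : ∀ m ∈ S, 1 ≤ m) (n : ℕ) (hn : 1 ≤ n) :
    genCycU S n =
      ∏ d ∈ n.divisors.filter (fun d => Nat.gcd d (n / d) = 1 ∧ n / d ∈ S), unitaryCyc d := by
  classical
  have hn0 : n ≠ 0 := by omega
  have hnC : (n : ℂ) ≠ 0 := Nat.cast_ne_zero.mpr hn0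
  unfold genCycU unitaryCyc
  rw [Finset.prod_sigma']
  refine Finset.prod_nbij' (fun j => ⟨n / ugcd j n, j / ugcd j n⟩)
    (fun x => (n / x.1) * x.2) ?_ ?_ ?_ ?_ ?_
  · intro j hjmem
    simp only [mem_filter, mem_Icc] at hjmem
    obtain ⟨⟨hj1, hjn⟩, hjS⟩ := hjmem
    obtain ⟨huj, hun, huco⟩ := ugcd_spec j n hn
    have hupos : 0 < ugcd j n := ugcd_pos j n hn
    simp only [mem_sigma, mem_filter, Nat.mem_divisors, mem_Icc]
    refine ⟨⟨⟨Nat.div_dvd_of_dvd hun, hn0⟩, ?_, ?_⟩, ⟨?_, ?_⟩, ?_⟩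
    · rw [Nat.div_div_self hun hn0]
      exact huco.symm
    · rw [Nat.div_div_self hun hn0]
      exact hjS
    · exact (Nat.one_le_div_iff hupos).mpr (Nat.le_of_dvd (by omega) huj)
    · exact Nat.div_le_div_right hjn
    · exact ugcd_div_eq_one hn (by omega)
  · rintro ⟨d, k⟩ hx
    simp only [mem_sigma, mem_filter, Nat.mem_divisors, mem_Icc] at hx
    obtain ⟨⟨⟨hd, -⟩, hco, hdS⟩, ⟨hk1, hkd⟩, hk⟩ := hx
    have hdpos : 0 < d := Nat.pos_of_dvd_of_pos hd hn
    have hepos : 0 < n / d := Nat.div_pos (Nat.le_of_dvd hn hd) hdpos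
    have key := ugcd_mul_eq hn hd hco hk1 hkd hk
    simp only [mem_filter, mem_Icc]
    refine ⟨⟨Nat.mul_pos hepos hk1, ?_⟩, ?_⟩
    · calc n / d * k ≤ n / d * d := Nat.mul_le_mul_left _ hkd
        _ = n := Nat.div_mul_cancel hd
    · rw [key]; exact hdS
  · intro j hjmem
    simp only [mem_filter, mem_Icc] at hjmem
    obtain ⟨⟨hj1, hjn⟩, hjS⟩ := hjmem
    obtain ⟨huj, hun, huco⟩ := ugcd_spec j n hn
    simp only
    rw [Nat.div_div_self hun hn0, Nat.mul_div_cancel' huj]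
  · rintro ⟨d, k⟩ hx
    simp only [mem_sigma, mem_filter, Nat.mem_divisors, mem_Icc] at hx
    obtain ⟨⟨⟨hd, -⟩, hco, hdS⟩, ⟨hk1, hkd⟩, hk⟩ := hx
    have hdpos : 0 < d := Nat.pos_of_dvd_of_pos hd hn
    have hepos : 0 < n / d := Nat.div_pos (Nat.le_of_dvd hn hd) hdpos
    have key := ugcd_mul_eq hn hd hco hk1 hkd hk
    simp only
    rw [key, Nat.div_div_self hd hn0, Nat.mul_div_cancel_left _ hepos]
  · intro j hjmem
    simp only [mem_filter, mem_Icc] at hjmem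
    obtain ⟨⟨hj1, hjn⟩, hjS⟩ := hjmem
    obtain ⟨huj, hun, huco⟩ := ugcd_spec j n hn
    have hupos : 0 < ugcd j n := ugcd_pos j n hn
    have huC : ((ugcd j n : ℕ) : ℂ) ≠ 0 := Nat.cast_ne_zero.mpr (by omega)
    simp only
    congr 2
    rw [← Complex.exp_nat_mul, ← Complex.exp_nat_mul]
    congr 1
    rw [Nat.cast_div huj huC, Nat.cast_div hun huC]
    have hnuC : (n : ℂ) / (ugcd j n : ℕ) ≠ 0 := div_ne_zero hnC huC
    field_simp
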